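/- Let B be a density matrix on ℂ^d, let L ∈ M_d(ℂ) be Hermitian, fix k ∈ {1,…,d}, and set α_k := 1 − B_{kk}. Then |B_{kk}·L_{kk}·tr(BL) + (LBL)_{kk} − (1/2)·((BL)_{kk} + (LB)_{kk})·(tr(BL) + L_{kk})| ≤ 5·‖L‖²·α_k, where M_{kk} denotes the (k,k) entry of a matrix M. -/

import Mathlib

/-!
Write `Q = 1 - E_kk` for the projection onto `e_kᗮ`. Splitting every product at `k` turns the
expression into `½ (s₁ + s₂) ((1 - B_kk) L_kk - (s₁ + s₂) - tr(QBQ L)) + (L QBQ L)_kk` with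
`s₁ = (BQL)_kk` and `s₂ = (LQB)_kk`. The compression `QBQ` is positive semidefinite with trace
`α_k`, so `|tr(QBQ M)| ≤ ‖M‖ α_k` bounds the last two terms by `‖L‖ α_k` and `‖L‖² α_k`, and
Cauchy–Schwarz for the form `⟨x, B y⟩` gives `|s₁|² ≤ B_kk (L* QBQ L)_kk ≤ ‖L‖² α_k` (likewise
for `s₂`). With `σ = |s₁ + s₂| / 2` the bound `σ (2 α_k ‖L‖ + 2σ) + α_k ‖L‖² ≤ 5 α_k ‖L‖²` follows
from `σ² ≤ α_k ‖L‖²` and `α_k ≤ 1`.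
-/

open scoped Matrix.Norms.L2Operator ComplexOrder

namespace Matrix

section NormBounds

variable {𝕜 m n : Type*} [RCLike 𝕜] [Fintype m] [Fintype n]

lemma norm_apply_le_l2_opNorm [DecidableEq n] (A : Matrix m n 𝕜) (i : m) (j : n) :
    ‖A i j‖ ≤ ‖A‖ :=
  calc ‖A i j‖ = ‖(EuclideanSpace.equiv m 𝕜).symm (A *ᵥ EuclideanSpace.single j 1) i‖ := by
        simp [EuclideanSpace.single, mulVec_single]
    _ ≤ ‖(EuclideanSpace.equiv m 𝕜).symm (A *ᵥ EuclideanSpace.single j 1)‖ :=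
        PiLp.norm_apply_le _ _
    _ ≤ ‖A‖ * ‖EuclideanSpace.single j (1 : 𝕜)‖ := A.l2_opNorm_mulVec _
    _ = ‖A‖ := by simp

lemma l2_opNorm_single_self_one [DecidableEq n] (k : n) :
    ‖(single k k 1 : Matrix n n 𝕜)‖ = 1 := by
  rw [← diagonal_single, l2_opNorm_diagonal, Pi.norm_single, norm_one]

lemma PosSemidef.norm_trace_mul_le [DecidableEq n] {A : Matrix n n 𝕜} (hA : A.PosSemidef)
    (M : Matrix n n 𝕜) : ‖(A * M).trace‖ ≤ ‖M‖ * RCLike.re A.trace := by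
  set U := hA.1.eigenvectorUnitary
  set ev := hA.1.eigenvalues
  have htrace : (A * M).trace = ∑ i, (ev i : 𝕜) * (star (U : Matrix n n 𝕜) * M * U) i i := by
    conv_lhs => rw [hA.1.spectral_theorem, Unitary.conjStarAlgAut_apply]
    rw [Matrix.mul_assoc, trace_mul_cycle]
    simp [trace, mul_diagonal, mul_comm, ev, U]
  have hconj : ‖star (U : Matrix n n 𝕜) * M * U‖ = ‖M‖ := by
    rw [CStarRing.norm_mul_coe_unitary, ← Unitary.coe_star, CStarRing.norm_coe_unitary_mul]
  calc ‖(A * M).trace‖ ≤ ∑ i, ev i * ‖(star (U : Matrix n n 𝕜) * M * U) i i‖ := by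
        rw [htrace]
        refine (norm_sum_le _ _).trans_eq (Finset.sum_congr rfl fun i _ => ?_)
        rw [norm_mul, RCLike.norm_ofReal, abs_of_nonneg (hA.eigenvalues_nonneg i)]
    _ ≤ ∑ i, ev i * ‖M‖ := by
        gcongr with i
        · exact hA.eigenvalues_nonneg i
        · exact hconj ▸ norm_apply_le_l2_opNorm _ i i
    _ = ‖M‖ * RCLike.re A.trace := by
        rw [hA.1.trace_eq_sum_eigenvalues, ← Finset.sum_mul, mul_comm]
        simp [ev]

lemma PosSemidef.norm_conjTranspose_mul_mul_apply_sq_le {A : Matrix n n 𝕜} (hA : A.PosSemidef)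
    (X Y : Matrix n n 𝕜) (i j : n) :
    ‖(Xᴴ * A * Y) i j‖ ^ 2 ≤ RCLike.re ((Xᴴ * A * X) i i) * RCLike.re ((Yᴴ * A * Y) j j) := by
  let _ := A.toSeminormedAddCommGroup hA
  let _ := A.toInnerProductSpace hA
  have hinner (U V : Matrix n n 𝕜) (i j : n) : (Uᴴ * A * V) i j = inner 𝕜 (Uᵀ i) (Vᵀ j) := by
    rw [mul_mul_apply]
    exact dotProduct_comm _ _
  simp only [hinner, ← @norm_sq_eq_re_inner 𝕜, ← mul_pow]
  gcongr
  exact norm_inner_le_norm _ _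

end NormBounds

section ProjCompl

variable {R n : Type*} [CommRing R] [Fintype n] [DecidableEq n]

def projCompl (k : n) : Matrix n n R := 1 - single k k 1

variable (k : n)

omit [Fintype n] in
lemma conjTranspose_projCompl {𝕜 : Type*} [RCLike 𝕜] :
    (projCompl k : Matrix n n 𝕜)ᴴ = projCompl k := by
  simp [projCompl]

lemma mul_projCompl_mul_apply_self (X Y : Matrix n n R) :
    (X * projCompl k * Y : Matrix n n R) k k = (X * Y) k k - X k k * Y k k := by
  simp [projCompl, mul_sub, sub_mul, mul_apply, single, ite_and]

lemma trace_projCompl_mul (X : Matrix n n R) :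
    (projCompl k * X).trace = X.trace - X k k := by
  simp [projCompl, sub_mul, trace_single_mul]

lemma trace_mul_projCompl (X : Matrix n n R) :
    (X * projCompl k).trace = X.trace - X k k := by
  rw [trace_mul_comm, trace_projCompl_mul]

lemma trace_projCompl_mul_projCompl_mul (X Y : Matrix n n R) :
    (projCompl k * X * projCompl k * Y).trace
      = (X * Y).trace - (X * Y) k k - (Y * X) k k + X k k * Y k k := by
  rw [Matrix.mul_assoc, Matrix.mul_assoc, trace_projCompl_mul, ← Matrix.mul_assoc,
    mul_projCompl_mul_apply_self, trace_mul_cycle, trace_mul_projCompl, trace_mul_comm]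
  ring

lemma mul_projCompl_conj_mul_apply_self (X Y Z : Matrix n n R) :
    (Y * (projCompl k * X * projCompl k) * Z : Matrix n n R) k k
      = (Y * X * Z) k k - Y k k * (X * Z) k k - (Y * X) k k * Z k k + Y k k * X k k * Z k k := by
  rw [show Y * (projCompl k * X * projCompl k) * Z = Y * projCompl k * (X * projCompl k * Z) by
    simp only [Matrix.mul_assoc], mul_projCompl_mul_apply_self,
    ← Matrix.mul_assoc Y (X * projCompl k), ← Matrix.mul_assoc Y X,
    mul_projCompl_mul_apply_self, mul_projCompl_mul_apply_self]
  ring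

lemma trace_projCompl_mul_mul_projCompl (X : Matrix n n R) :
    (projCompl k * X * projCompl k).trace = X.trace - X k k := by
  simpa using trace_projCompl_mul_projCompl_mul k X 1

end ProjCompl

lemma diagonal_block_eq_projCompl {K n : Type*} [Field K] [CharZero K] [Fintype n] [DecidableEq n]
    (B L : Matrix n n K) (k : n) :
    B k k * L k k * (B * L).trace + (L * B * L) k k
        - (1 / 2) * ((B * L) k k + (L * B) k k) * ((B * L).trace + L k k)
      = ((B * projCompl k * L : Matrix n n K) k k + (L * projCompl k * B : Matrix n n K) k k) / 2
          * ((1 - B k k) * L k k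
            - ((B * projCompl k * L : Matrix n n K) k k + (L * projCompl k * B : Matrix n n K) k k)
            - (projCompl k * B * projCompl k * L).trace)
        + (L * (projCompl k * B * projCompl k) * L : Matrix n n K) k k := by
  rw [mul_projCompl_mul_apply_self, mul_projCompl_mul_apply_self,
    trace_projCompl_mul_projCompl_mul, mul_projCompl_conj_mul_apply_self]
  ring

section DensityMatrix

variable {𝕜 n : Type*} [RCLike 𝕜] [Fintype n] [DecidableEq n]
  {B : Matrix n n 𝕜} (hB : B.PosSemidef) (hB1 : B.trace = 1) (k : n)
include hB

lemma PosSemidef.projCompl_mul_mul_projCompl : (projCompl k * B * projCompl k).PosSemidef := by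
  simpa [conjTranspose_projCompl] using hB.mul_mul_conjTranspose_same (projCompl k)

include hB1

lemma PosSemidef.re_apply_self_le_one : RCLike.re (B k k) ≤ 1 := by
  have := RCLike.nonneg_iff.mp (hB.projCompl_mul_mul_projCompl k).trace_nonneg
  rw [trace_projCompl_mul_mul_projCompl, hB1, map_sub, RCLike.one_re] at this
  linarith

lemma PosSemidef.norm_one_sub_apply_self : ‖1 - B k k‖ = 1 - RCLike.re (B k k) := by
  have hreal : 1 - B k k = ((1 - RCLike.re (B k k) : ℝ) : 𝕜) := by
    rw [RCLike.ofReal_sub, RCLike.ofReal_one, hB.1.coe_re_apply_self]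
  rw [hreal, RCLike.norm_ofReal, abs_of_nonneg (sub_nonneg.mpr (hB.re_apply_self_le_one hB1 k))]

lemma PosSemidef.norm_trace_projCompl_conj_mul_le (M : Matrix n n 𝕜) :
    ‖(projCompl k * B * projCompl k * M).trace‖ ≤ ‖M‖ * (1 - RCLike.re (B k k)) := by
  have h := (hB.projCompl_mul_mul_projCompl k).norm_trace_mul_le M
  rwa [trace_projCompl_mul_mul_projCompl, hB1, map_sub, RCLike.one_re] at h

lemma PosSemidef.norm_mul_projCompl_conj_mul_apply_self_le (X Y : Matrix n n 𝕜) :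
    ‖(X * (projCompl k * B * projCompl k) * Y : Matrix n n 𝕜) k k‖
      ≤ ‖X‖ * ‖Y‖ * (1 - RCLike.re (B k k)) := by
  set C : Matrix n n 𝕜 := projCompl k * B * projCompl k
  have htrace : (X * C * Y) k k = (C * (Y * single k k 1 * X)).trace :=
    calc (X * C * Y) k k = (X * C * Y * single k k 1).trace := by simp [trace_mul_single]
      _ = (C * (Y * single k k 1 * X)).trace := by
        rw [Matrix.mul_assoc (X * C), Matrix.mul_assoc X, trace_mul_comm X, Matrix.mul_assoc C]
  have hnorm : ‖Y * single k k 1 * X‖ ≤ ‖X‖ * ‖Y‖ :=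
    calc ‖Y * single k k 1 * X‖ ≤ ‖Y‖ * ‖(single k k 1 : Matrix n n 𝕜)‖ * ‖X‖ :=
          norm_mul₃_le
      _ = ‖X‖ * ‖Y‖ := by rw [l2_opNorm_single_self_one]; ring
  rw [htrace]
  refine (hB.norm_trace_projCompl_conj_mul_le hB1 k _).trans ?_
  gcongr
  linarith [hB.re_apply_self_le_one hB1 k]

lemma PosSemidef.norm_sq_mul_projCompl_mul_apply_self_le (L : Matrix n n 𝕜) :
    ‖(B * projCompl k * L : Matrix n n 𝕜) k k‖ ^ 2 ≤ ‖L‖ ^ 2 * (1 - RCLike.re (B k k)) := by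
  have hcs := hB.norm_conjTranspose_mul_mul_apply_sq_le 1 (projCompl k * L) k k
  simp only [conjTranspose_one, Matrix.one_mul, Matrix.mul_one, conjTranspose_mul,
    conjTranspose_projCompl, ← Matrix.mul_assoc] at hcs
  set M := (Lᴴ * projCompl k * B * projCompl k * L : Matrix n n 𝕜) k k
  have hM : ‖M‖ ≤ ‖L‖ ^ 2 * (1 - RCLike.re (B k k)) := by
    have h := hB.norm_mul_projCompl_conj_mul_apply_self_le hB1 k Lᴴ L
    rwa [l2_opNorm_conjTranspose, ← sq, ← Matrix.mul_assoc, ← Matrix.mul_assoc] at h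
  have hb0 : 0 ≤ RCLike.re (B k k) := (RCLike.nonneg_iff.mp hB.diag_nonneg).1
  calc ‖(B * projCompl k * L : Matrix n n 𝕜) k k‖ ^ 2 ≤ RCLike.re (B k k) * RCLike.re M := hcs
    _ ≤ RCLike.re (B k k) * ‖M‖ := mul_le_mul_of_nonneg_left (RCLike.re_le_norm M) hb0
    _ ≤ 1 * ‖M‖ := mul_le_mul_of_nonneg_right (hB.re_apply_self_le_one hB1 k) (norm_nonneg M)
    _ ≤ ‖L‖ ^ 2 * (1 - RCLike.re (B k k)) := by rwa [one_mul]

lemma PosSemidef.norm_sq_mul_projCompl_mul_apply_self_le' (L : Matrix n n 𝕜) :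
    ‖(L * projCompl k * B : Matrix n n 𝕜) k k‖ ^ 2 ≤ ‖L‖ ^ 2 * (1 - RCLike.re (B k k)) := by
  have h := hB.norm_sq_mul_projCompl_mul_apply_self_le hB1 k Lᴴ
  rwa [l2_opNorm_conjTranspose, ← norm_star, ← conjTranspose_apply, conjTranspose_mul,
    conjTranspose_mul, conjTranspose_conjTranspose, hB.1.eq, conjTranspose_projCompl,
    ← Matrix.mul_assoc] at h

end DensityMatrix

end Matrix

lemma norm_half_add_mul_sub_add_le {𝕜 : Type*} [RCLike 𝕜] {s₁ s₂ r m c l : 𝕜} {a N : ℝ}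
    (ha0 : 0 ≤ a) (ha1 : a ≤ 1) (hc : ‖c‖ = a) (hl : ‖l‖ ≤ N) (hs₁ : ‖s₁‖ ^ 2 ≤ N ^ 2 * a)
    (hs₂ : ‖s₂‖ ^ 2 ≤ N ^ 2 * a) (hr : ‖r‖ ≤ N * a) (hm : ‖m‖ ≤ N ^ 2 * a) :
    ‖(s₁ + s₂) / 2 * (c * l - (s₁ + s₂) - r) + m‖ ≤ 5 * N ^ 2 * a := by
  set σ := ‖s₁ + s₂‖ / 2 with hσ_def
  have hσ0 : 0 ≤ σ := by positivity
  have hσ : σ ^ 2 ≤ N ^ 2 * a :=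
    calc σ ^ 2 ≤ ((‖s₁‖ + ‖s₂‖) / 2) ^ 2 := by
          gcongr
          linarith [norm_add_le s₁ s₂]
      _ ≤ N ^ 2 * a := by nlinarith [sq_nonneg (‖s₁‖ - ‖s₂‖)]
  have hcl : ‖c * l‖ ≤ a * N := by
    rw [norm_mul, hc]; exact mul_le_mul_of_nonneg_left hl ha0
  have hfactor : ‖c * l - (s₁ + s₂) - r‖ ≤ a * N + 2 * σ + N * a := by
    have h₁ := norm_sub_le (c * l - (s₁ + s₂)) r
    have h₂ := norm_sub_le (c * l) (s₁ + s₂)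
    linarith
  calc ‖(s₁ + s₂) / 2 * (c * l - (s₁ + s₂) - r) + m‖
      ≤ σ * ‖c * l - (s₁ + s₂) - r‖ + ‖m‖ := by
        refine (norm_add_le _ _).trans_eq ?_
        rw [norm_mul, norm_div, RCLike.norm_two]
    _ ≤ σ * (a * N + 2 * σ + N * a) + N ^ 2 * a := by gcongr
    _ ≤ 5 * N ^ 2 * a := by
        nlinarith [mul_nonneg ha0 (sq_nonneg (N - σ)), mul_nonneg (sub_nonneg.2 ha1) (sq_nonneg σ)]

theorem diagonal_block_bound_general (d : ℕ)
    (B L : Matrix (Fin d) (Fin d) ℂ)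
    (hB : B.PosSemidef) (hB1 : B.trace = 1) (k : Fin d) :
    ‖B k k * L k k * (B * L).trace + (L * B * L) k k
        - (1 / 2) * ((B * L) k k + (L * B) k k) * ((B * L).trace + L k k)‖
      ≤ 5 * ‖L‖ ^ 2 * (1 - (B k k).re) := by
  rw [Matrix.diagonal_block_eq_projCompl]
  refine norm_half_add_mul_sub_add_le ?_ ?_ (hB.norm_one_sub_apply_self hB1 k)
    (Matrix.norm_apply_le_l2_opNorm L k k) (hB.norm_sq_mul_projCompl_mul_apply_self_le hB1 k L)
    (hB.norm_sq_mul_projCompl_mul_apply_self_le' hB1 k L)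
    (hB.norm_trace_projCompl_conj_mul_le hB1 k L) ?_
  · exact sub_nonneg.mpr (hB.re_apply_self_le_one hB1 k)
  · exact sub_le_self 1 (RCLike.nonneg_iff.mp hB.diag_nonneg).1
  · simpa [sq] using hB.norm_mul_projCompl_conj_mul_apply_self_le hB1 k L L

/-- For a density matrix `B`, a Hermitian matrix `L` and a fixed index `k`, with
`α_k := 1 − B_{kk}`, one has
`|B_{kk} L_{kk} tr(BL) + (LBL)_{kk} − (1/2)((BL)_{kk} + (LB)_{kk})(tr(BL) + L_{kk})| ≤ 5‖L‖² α_k`. -/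
theorem diagonal_block_bound (d : ℕ) (hd : 1 ≤ d)
    (B L : Matrix (Fin d) (Fin d) ℂ)
    (hB : B.PosSemidef) (hB1 : B.trace = 1)
    (hL : L.IsHermitian) (k : Fin d) :
    ‖B k k * L k k * (B * L).trace + (L * B * L) k k
        - (1 / 2) * ((B * L) k k + (L * B) k k) * ((B * L).trace + L k k)‖
      ≤ 5 * ‖L‖ ^ 2 * (1 - (B k k).re) :=
  diagonal_block_bound_general d B L hB hB1 k
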